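/- For discrete random variables on a finite space, suppose the joint pmf factorizes as f(y,ā,x̄) = f(y|ā,x̄) · ∏_τ [f(x_τ|ā_{τ-1},x̄_{τ-1}) · f(a_τ|ā_{τ-1},x̄_τ)] with all propensity scores positive. Then summing the inverse-propensity-weighted joint pmf over covariate histories, Σ_{x̄} f(y,ā,x̄) / ∏_τ f(a_τ|ā_{τ-1},x̄_τ), recovers the g-formula counterfactual pmf Σ_{x̄} f(y|ā,x̄) · ∏_τ f(x_τ|ā_{τ-1},x̄_{τ-1}). -/

import Mathlib

open Finset

theorem mul_prod_mul_div_prod {ι K : Type*} [Field K] (s : Finset ι) (c : K) (f g : ι → K)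
    (hg : ∀ i ∈ s, g i ≠ 0) :
    (c * ∏ i ∈ s, f i * g i) / ∏ i ∈ s, g i = c * ∏ i ∈ s, f i := by
  rw [prod_mul_distrib, ← mul_assoc, mul_div_assoc, div_self (prod_ne_zero_iff.mpr hg), mul_one]

theorem g_formula_iptw_discrete_general
    {Y H : Type*} [Fintype H] (d : ℕ)
    (joint : Y → H → ℝ) (cond : Y → H → ℝ)
    (cov : Fin d → H → ℝ) (prop : Fin d → H → ℝ)
    (hpos : ∀ τ x, 0 < prop τ x)
    (hfact : ∀ y x,
      joint y x = cond y x * ∏ τ : Fin d, (cov τ x * prop τ x)) :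
    ∀ y : Y,
      ∑ x : H, joint y x / ∏ τ : Fin d, prop τ x
        = ∑ x : H, cond y x * ∏ τ : Fin d, cov τ x := by
  intro y
  refine sum_congr rfl fun x _ => ?_
  rw [hfact]
  exact mul_prod_mul_div_prod _ _ _ _ fun τ _ => (hpos τ x).ne'

/-- **g-formula (Lemma 1, finite discrete version).**
For finite outcome and covariate-history spaces, if the joint pmf factorizes
according to the causal DAG with strictly positive propensity scores, then the
inverse-propensity-weighted sum of the joint pmf over covariate histories
recovers the g-formula counterfactual pmf. -/
theorem g_formula_iptw_discrete
    {Y H : Type*} [Fintype Y] [Fintype H] (d : ℕ)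
    (joint : Y → H → ℝ) (cond : Y → H → ℝ)
    (cov : Fin d → H → ℝ) (prop : Fin d → H → ℝ)
    (hpos : ∀ τ x, 0 < prop τ x)
    (hfact : ∀ y x,
      joint y x = cond y x * ∏ τ : Fin d, (cov τ x * prop τ x)) :
    ∀ y : Y,
      ∑ x : H, joint y x / ∏ τ : Fin d, prop τ x
        = ∑ x : H, cond y x * ∏ τ : Fin d, cov τ x :=
  g_formula_iptw_discrete_general d joint cond cov prop hpos hfact
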